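/- Any infinite set A ⊆ ℕ that is not immune has asymptotic density 1 under some computable permutation; that is, if A is infinite and has an infinite computably enumerable subset, then there is a computable permutation π : ℕ → ℕ such that π(A) has asymptotic density 1. -/

import Mathlib

open Filter

open scoped Classical

/-- The `n`-th partial density of `S ⊆ ℕ`: `|S ∩ [0,n)| / n`. -/
noncomputable def partialDensity (S : Set ℕ) (n : ℕ) : ℝ :=
  (((Finset.range n).filter (fun m => m ∈ S)).card : ℝ) / n

/-- `S` has asymptotic density `d`. -/
def HasDensity (S : Set ℕ) (d : ℝ) : Prop :=
  Tendsto (partialDensity S) atTop (nhds d)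

/-- The upper asymptotic density of `S`. -/
noncomputable def upperDensity (S : Set ℕ) : ℝ :=
  limsup (partialDensity S) atTop

/-- The lower asymptotic density of `S`. -/
noncomputable def lowerDensity (S : Set ℕ) : ℝ :=
  liminf (partialDensity S) atTop

/-- A computable permutation of `ℕ`. -/
def ComputablePerm (π : ℕ → ℕ) : Prop :=
  Function.Bijective π ∧ Computable π

/-- `A` is computably enumerable: the domain of a partial computable function. -/
def CE (A : Set ℕ) : Prop :=
  ∃ f : ℕ →. ℕ, Partrec f ∧ ∀ n, n ∈ A ↔ (f n).Dom

/-- The principal function of `S`: `p_S n` is the least `x` with `|S ∩ [0,x)| ≥ n`. -/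
noncomputable def principalFn (S : Set ℕ) (n : ℕ) : ℕ :=
  sInf {x | n ≤ ((Finset.range x).filter (fun m => m ∈ S)).card}

/-!
Enumerating a c.e. set `B` by a dovetailed search for ever larger elements yields a computable,
strictly increasing sequence in `B` whose consecutive terms differ by at least two; its range `C`
is a computable subset of `B` that is infinite and coinfinite. The permutation sending the `k`-th
element of `C` to the `k`-th non-square and the `k`-th element of `Cᶜ` to the `k`-th square is
computable and maps `A ⊇ C` onto a superset of the non-squares, which have density `1`.
-/

namespace ComputablePred

variable {p : ℕ → Prop} [DecidablePred p]

theorem computable_count (hp : ComputablePred p) : Computable (Nat.count p) := by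
  have h : Computable fun n =>
      Nat.rec (motive := fun _ => ℕ) 0 (fun k c => c + cond (decide (p k)) 1 0) n :=
    Computable.nat_rec .id (.const 0) <| Computable.to₂ <|
      Primrec.nat_add.to_comp.comp (Computable.snd.comp .snd)
        ((hp.decide.comp (Computable.fst.comp .snd)).cond (.const 1) (.const 0))
  refine h.of_eq fun n => ?_
  induction n with
  | zero => rfl
  | succ n ih => simp [Nat.count_succ, ← ih, Bool.cond_decide]

theorem computable_nth (hp : ComputablePred p) (hinf : {n | p n}.Infinite) :
    Computable (Nat.nth p) := by
  have hex : ∀ k, ∃ n, k < Nat.count p (n + 1) := fun k =>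
    ⟨Nat.nth p k, (Nat.lt_nth_iff_count_lt hinf).2 (Nat.lt_succ_self _)⟩
  have hfind : Computable fun k => Nat.find (hex k) :=
    Computable.find (P := fun k n => k < Nat.count p (n + 1)) (Computable.computablePred <|
      Primrec.nat_lt.decide.to_comp.comp .fst
        ((computable_count hp).comp (Computable.succ.comp .snd))) hex
  refine hfind.of_eq fun k => le_antisymm (Nat.find_min' _ ?_) ?_
  · exact (Nat.lt_nth_iff_count_lt hinf).2 (Nat.lt_succ_self _)
  · exact Nat.lt_succ_iff.1 ((Nat.lt_nth_iff_count_lt hinf).1 (Nat.find_spec (hex k)))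

end ComputablePred

noncomputable def matchPerm (p q : ℕ → Prop) [DecidablePred p] (n : ℕ) : ℕ :=
  if p n then Nat.nth q (Nat.count p n) else Nat.nth (¬ q ·) (Nat.count (¬ p ·) n)

section matchPerm

variable {p q : ℕ → Prop} [DecidablePred p]

theorem matchPerm_of_pos {n : ℕ} (hn : p n) : matchPerm p q n = Nat.nth q (Nat.count p n) :=
  if_pos hn

theorem matchPerm_of_neg {n : ℕ} (hn : ¬ p n) :
    matchPerm p q n = Nat.nth (¬ q ·) (Nat.count (¬ p ·) n) :=
  if_neg hn

theorem matchPerm_mem (hq : {n | q n}.Infinite) {n : ℕ} (hn : p n) : q (matchPerm p q n) := by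
  rw [matchPerm_of_pos hn]
  exact Nat.nth_mem_of_infinite hq _

variable [DecidablePred q]

theorem matchPerm_matchPerm (hq : {n | q n}.Infinite) (hq' : {n | ¬ q n}.Infinite) (n : ℕ) :
    matchPerm q p (matchPerm p q n) = n := by
  by_cases hn : p n
  · rw [matchPerm_of_pos (matchPerm_mem hq hn), matchPerm_of_pos hn,
      Nat.count_nth_of_infinite hq, Nat.nth_count hn]
  · have hqn : ¬ q (matchPerm p q n) := by
      rw [matchPerm_of_neg hn]
      exact Nat.nth_mem_of_infinite hq' _
    rw [matchPerm_of_neg hqn, matchPerm_of_neg hn, Nat.count_nth_of_infinite hq',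
      Nat.nth_count (p := (¬ p ·)) hn]

theorem matchPerm_bijective (hp : {n | p n}.Infinite) (hp' : {n | ¬ p n}.Infinite)
    (hq : {n | q n}.Infinite) (hq' : {n | ¬ q n}.Infinite) : (matchPerm p q).Bijective :=
  Function.bijective_iff_has_inverse.2
    ⟨matchPerm q p, matchPerm_matchPerm hq hq', matchPerm_matchPerm hp hp'⟩

theorem subset_image_matchPerm (hp : {n | p n}.Infinite) (hp' : {n | ¬ p n}.Infinite) :
    {n | q n} ⊆ matchPerm p q '' {n | p n} := fun n hn =>
  ⟨matchPerm q p n, matchPerm_mem hp hn, matchPerm_matchPerm hp hp' n⟩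

theorem computable_matchPerm (hp : ComputablePred p) (hq : ComputablePred q)
    (hqi : {n | q n}.Infinite) (hqi' : {n | ¬ q n}.Infinite) : Computable (matchPerm p q) :=
  ComputablePred.ite ((hq.computable_nth hqi).comp hp.computable_count)
    ((hq.not.computable_nth hqi').comp hp.not.computable_count) hp

end matchPerm

open Nat.Partrec in
theorem CE.exists_computable_gt {B : Set ℕ} (hB : CE B) (hinf : B.Infinite) :
    ∃ g : ℕ → ℕ, Computable g ∧ ∀ m, m < g m ∧ g m ∈ B := by
  obtain ⟨f, hf, hdom⟩ := hB
  obtain ⟨c, rfl⟩ := Code.exists_code.1 (Partrec.nat_iff.1 hf)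
  -- search for a pair `k = ⟪n, s⟫` such that `n > m` is seen to be in `B` within `s` steps
  let R : ℕ → ℕ → Prop := fun m k =>
    m < k.unpair.1 ∧ (Code.evaln k.unpair.2 c k.unpair.1).isSome
  have hex : ∀ m, ∃ k, R m k := by
    intro m
    obtain ⟨n, hnB, hmn⟩ := hinf.exists_gt m
    obtain ⟨x, hx⟩ := Part.dom_iff_mem.1 ((hdom n).1 hnB)
    obtain ⟨s, hs⟩ := Code.evaln_complete.1 hx
    exact ⟨Nat.pair n s, by simpa [R, hmn] using Option.isSome_iff_exists.2 ⟨x, hs⟩⟩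
  have hR : ComputablePred fun mk : ℕ × ℕ => R mk.1 mk.2 := by
    have hk : Primrec fun mk : ℕ × ℕ => mk.2.unpair := Primrec.unpair.comp .snd
    refine Computable.computablePred (Primrec.to_comp ?_)
    refine (Primrec.and.comp (Primrec.nat_lt.decide.comp .fst (Primrec.fst.comp hk))
      (Primrec.option_isSome.comp (Code.primrec_evaln.comp
        (((Primrec.snd.comp hk).pair (.const c)).pair (Primrec.fst.comp hk))))).of_eq
      fun mk => ?_
    simp [R]
  refine ⟨fun m => (Nat.find (hex m)).unpair.1,
    (Computable.fst.comp (Computable.unpair.comp (Computable.find hR hex))), fun m => ?_⟩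
  obtain ⟨hlt, hsome⟩ := Nat.find_spec (hex m)
  obtain ⟨x, hx⟩ := Option.isSome_iff_exists.1 hsome
  exact ⟨hlt, (hdom _).2 (Part.dom_iff_mem.2 ⟨x, Code.evaln_sound hx⟩)⟩

theorem StrictMono.computablePred_mem_range {t : ℕ → ℕ} (hmono : StrictMono t)
    (ht : Computable t) : ComputablePred (· ∈ Set.range t) := by
  have hex : ∀ n, ∃ i, n ≤ t i := fun n => ⟨n, hmono.le_apply⟩
  have hidx : Computable fun n => Nat.find (hex n) :=
    Computable.find (P := fun n i => n ≤ t i) (Computable.computablePred <|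
      Primrec.nat_le.decide.to_comp.comp .fst (ht.comp .snd)) hex
  refine ComputablePred.of_eq (Computable.computablePred <|
    Primrec.eq.decide.to_comp.comp (ht.comp hidx) .id) fun n => ⟨fun h => ⟨_, h⟩, ?_⟩
  rintro ⟨i, rfl⟩
  exact le_antisymm (hmono.monotone (Nat.find_min' _ le_rfl)) (Nat.find_spec (hex (t i)))

theorem CE.exists_computable_subset {B : Set ℕ} (hB : CE B) (hinf : B.Infinite) :
    ∃ C ⊆ B, ComputablePred (· ∈ C) ∧ C.Infinite ∧ Cᶜ.Infinite := by
  obtain ⟨g, hg, hgB⟩ := hB.exists_computable_gt hinf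
  let t : ℕ → ℕ := fun i => Nat.rec (g 0) (fun _ m => g (m + 1)) i
  have ht : Computable t := Computable.nat_rec .id (.const (g 0))
    (hg.comp (Computable.succ.comp (Computable.snd.comp .snd))).to₂
  have ht_succ : ∀ i, t i + 1 < t (i + 1) := fun i => (hgB _).1
  have hmono : StrictMono t := strictMono_nat_of_lt_succ fun i => (ht_succ i).trans' (lt_add_one _)
  refine ⟨Set.range t, ?_, hmono.computablePred_mem_range ht,
    Set.infinite_range_of_injective hmono.injective, ?_⟩
  · rintro _ ⟨i | i, rfl⟩
    exacts [(hgB 0).2, (hgB _).2]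
  -- consecutive values differ by at least two, so no `t i + 1` is a value
  refine Set.infinite_of_injective_forall_mem (f := fun i => t i + 1)
    (fun i j h => hmono.injective (by simpa using h)) ?_
  rintro i ⟨j, hj⟩
  rcases le_or_gt j i with hji | hij
  · have := hmono.monotone hji
    omega
  · have := hmono.monotone (show i + 1 ≤ j from hij)
    have := ht_succ i
    omega

theorem partialDensity_nonneg (S : Set ℕ) (n : ℕ) : 0 ≤ partialDensity S n := by
  unfold partialDensity
  positivity

theorem partialDensity_le_one (S : Set ℕ) (n : ℕ) : partialDensity S n ≤ 1 := by
  unfold partialDensity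
  rcases Nat.eq_zero_or_pos n with rfl | hn
  · simp
  · rw [div_le_one (by exact_mod_cast hn)]
    exact_mod_cast (Finset.card_filter_le _ _).trans_eq (Finset.card_range n)

theorem partialDensity_mono {S T : Set ℕ} (hST : S ⊆ T) (n : ℕ) :
    partialDensity S n ≤ partialDensity T n := by
  unfold partialDensity
  gcongr

theorem partialDensity_compl (S : Set ℕ) {n : ℕ} (hn : n ≠ 0) :
    partialDensity Sᶜ n = 1 - partialDensity S n := by
  have hcard := Finset.card_filter_add_card_filter_not (s := Finset.range n) (p := (· ∈ S))
  rw [Finset.card_range] at hcard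
  unfold partialDensity
  rw [eq_sub_iff_add_eq, ← add_div, div_eq_one_iff_eq (by exact_mod_cast hn)]
  simp only [Set.mem_compl_iff]
  exact_mod_cast (add_comm _ _).trans hcard

theorem HasDensity.compl {S : Set ℕ} {d : ℝ} (h : HasDensity S d) : HasDensity Sᶜ (1 - d) :=
  (tendsto_const_nhds.sub h).congr'
    ((eventually_ne_atTop 0).mono fun _ hn => (partialDensity_compl S hn).symm)

theorem HasDensity.mono_of_one {S T : Set ℕ} (hS : HasDensity S 1) (hST : S ⊆ T) :
    HasDensity T 1 :=
  tendsto_of_tendsto_of_tendsto_of_le_of_le hS tendsto_const_nhds (partialDensity_mono hST)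
    (partialDensity_le_one T)

theorem partialDensity_isSquare_le (n : ℕ) :
    partialDensity {m | IsSquare m} n ≤ (Nat.sqrt n + 1) / n := by
  unfold partialDensity
  gcongr
  norm_cast
  calc _ ≤ ((Finset.range (Nat.sqrt n + 1)).image fun r => r * r).card := by
        refine Finset.card_le_card fun m hm => ?_
        simp only [Finset.mem_filter, Finset.mem_range, Set.mem_ofPred_eq] at hm
        obtain ⟨hmn, r, rfl⟩ := hm
        exact Finset.mem_image.2 ⟨r, Finset.mem_range.2 <| Nat.lt_succ_of_le <|
          Nat.le_sqrt.2 hmn.le, rfl⟩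
    _ ≤ Nat.sqrt n + 1 := Finset.card_image_le.trans (Finset.card_range _).le

theorem tendsto_sqrt_add_one_div :
    Tendsto (fun n : ℕ => ((Nat.sqrt n : ℝ) + 1) / n) atTop (nhds 0) := by
  have hsqrt : Tendsto (fun n : ℕ => (Nat.sqrt n : ℝ)) atTop atTop :=
    tendsto_natCast_atTop_atTop.comp <|
      tendsto_atTop_atTop.2 fun b => ⟨b * b, fun n hn => Nat.le_sqrt.2 hn⟩
  refine squeeze_zero' (.of_forall fun n => by positivity)
    ((eventually_ge_atTop 1).mono fun n hn => ?_)
    (tendsto_const_nhds (x := (2 : ℝ)).div_atTop hsqrt)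
  -- `(s + 1) / n ≤ 2 s / s² = 2 / s` for `s = ⌊√n⌋ ≥ 1`
  have hs : (1 : ℝ) ≤ Nat.sqrt n := by exact_mod_cast Nat.sqrt_pos.2 hn
  have hsn : (Nat.sqrt n : ℝ) * Nat.sqrt n ≤ n := by exact_mod_cast Nat.sqrt_le n
  rw [div_le_div_iff₀ (by exact_mod_cast hn) (by positivity)]
  nlinarith

theorem hasDensity_isSquare : HasDensity {n : ℕ | IsSquare n} 0 :=
  squeeze_zero (partialDensity_nonneg _) partialDensity_isSquare_le tendsto_sqrt_add_one_div

theorem computablePred_isSquare : ComputablePred (IsSquare : ℕ → Prop) :=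
  ComputablePred.of_eq (Computable.computablePred <| Primrec.to_comp <|
      Primrec.eq.decide.comp (Primrec.nat_mul.comp Primrec.nat_sqrt Primrec.nat_sqrt) .id)
    fun n => by simpa [IsSquare, eq_comm] using (Nat.exists_mul_self n).symm

theorem infinite_isSquare : {n : ℕ | IsSquare n}.Infinite :=
  Set.infinite_of_injective_forall_mem (f := fun r => r * r)
    (fun _ _ h => Nat.mul_self_inj.1 h) fun r => ⟨r, rfl⟩

theorem infinite_not_isSquare : {n : ℕ | ¬ IsSquare n}.Infinite :=
  Set.infinite_of_injective_forall_mem (f := fun r => (r + 1) * (r + 1) + 1)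
    (fun _ _ h => by simpa [Nat.mul_self_inj] using h) fun r ⟨t, ht⟩ =>
      Nat.not_exists_sq (m := r + 1) (Nat.lt_succ_self _) (by nlinarith) ⟨t, ht.symm⟩

theorem non_immune_density_one_general (A : Set ℕ)
    (hni : ∃ B : Set ℕ, B ⊆ A ∧ CE B ∧ B.Infinite) :
    ∃ π : ℕ → ℕ, ComputablePerm π ∧ HasDensity (π '' A) 1 := by
  obtain ⟨B, hBA, hB, hBinf⟩ := hni
  obtain ⟨C, hCB, hC, hCinf, hCcoinf⟩ := hB.exists_computable_subset hBinf
  have hsq : {n : ℕ | ¬ ¬ IsSquare n}.Infinite := by simpa using infinite_isSquare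
  refine ⟨matchPerm (· ∈ C) (¬ IsSquare ·),
    ⟨matchPerm_bijective hCinf hCcoinf infinite_not_isSquare hsq,
      computable_matchPerm hC computablePred_isSquare.not infinite_not_isSquare hsq⟩, ?_⟩
  have hdensity : HasDensity {n | IsSquare n}ᶜ 1 :=
    sub_zero (1 : ℝ) ▸ hasDensity_isSquare.compl
  exact hdensity.mono_of_one ((subset_image_matchPerm (p := (· ∈ C)) hCinf hCcoinf).trans
    (Set.image_mono (hCB.trans hBA)))

theorem non_immune_density_one (A : Set ℕ) (hinf : A.Infinite)
    (hni : ∃ B : Set ℕ, B ⊆ A ∧ CE B ∧ B.Infinite) :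
    ∃ π : ℕ → ℕ, ComputablePerm π ∧ HasDensity (π '' A) 1 :=
  non_immune_density_one_general A hni
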